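/- arXiv:2405.20293 — 3 statements merged into one kernel-verified Lean document; each statement's English description precedes it below -/
import Mathlib

section
/- For B ≥ 3 and T ≥ 1, the sum over quadruples of positive integers (a1,a2,a3,a4) with ai ≤ B for all i and a_i^2 a_j^2 a_k^2 / a_l ≤ B/T for one fixed choice of distinct (i,j,k,l), and a_i^2 a_j^2 a_k^2/(W^3 B) ≤ a_l for some W ≥ 1, of 1/(a1·a2·a3·a4), is ≪ (log B)^3 · (log(W^3 T) + 1). -/
open scoped Classical

lemma tel (c : ℕ) (hc : 1 ≤ c) : ∀ d, c ≤ d →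
    ∑ n ∈ Finset.Ioc c d, (1:ℝ)/n ≤ Real.log d - Real.log c := by
  intro d
  induction d with
  | zero => intro h; omega
  | succ d ih =>
    intro h
    rcases Nat.lt_or_ge c (d+1) with h' | h'
    · have hcd : c ≤ d := by omega
      rw [Finset.sum_Ioc_succ_top hcd]
      have hd1 : (1:ℝ) ≤ d := by exact_mod_cast hc.trans hcd
      have hq : (0:ℝ) < (d:ℝ)/((d:ℝ)+1) := by positivity
      have hlog := Real.log_le_sub_one_of_pos hq
      rw [Real.log_div (by linarith) (by linarith)] at hlog
      have key : (1:ℝ)/((d:ℝ)+1) ≤ Real.log ((d:ℝ)+1) - Real.log d := by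
        have : (d:ℝ)/((d:ℝ)+1) - 1 = -(1/((d:ℝ)+1)) := by field_simp; ring
        rw [this] at hlog; linarith
      have := ih hcd
      push_cast
      linarith
    · have : c = d + 1 := by omega
      subst this
      simp

lemma harm (s : Finset ℕ) (a R : ℝ) (ha : 1 ≤ a) (hR : 1 ≤ R)
    (h : ∀ n ∈ s, a ≤ (n:ℝ) ∧ (n:ℝ) ≤ a * R) :
    ∑ n ∈ s, (1:ℝ)/n ≤ Real.log R + 1 := by
  have hRlog : 0 ≤ Real.log R := Real.log_nonneg hR
  set c := ⌈a⌉₊ with hc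
  set d := ⌊a*R⌋₊ with hd
  have hc1 : 1 ≤ c := Nat.one_le_ceil_iff.mpr (by linarith)
  have hsub : s ⊆ Finset.Icc c d := by
    intro n hn
    obtain ⟨h1, h2⟩ := h n hn
    simp only [Finset.mem_Icc]
    exact ⟨Nat.ceil_le.mpr h1, Nat.le_floor h2⟩
  have hnonneg : ∀ n ∈ Finset.Icc c d, (0:ℝ) ≤ 1/n := by
    intro n _; positivity
  refine le_trans (Finset.sum_le_sum_of_subset_of_nonneg hsub (fun n hn _ => hnonneg n hn)) ?_
  rcases Nat.lt_or_ge d c with hdc | hdc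
  · rw [Finset.Icc_eq_empty (by omega)]; simp; linarith
  · have hsplit : Finset.Icc c d = insert c (Finset.Ioc c d) := by
      rw [Finset.Icc_eq_cons_Ioc hdc, Finset.cons_eq_insert]
    rw [hsplit, Finset.sum_insert (by simp)]
    have h1c : (1:ℝ)/c ≤ 1 := by
      rw [div_le_one (by exact_mod_cast hc1)]
      exact_mod_cast hc1
    have htel := tel c hc1 d hdc
    have hca : (a:ℝ) ≤ c := Nat.le_ceil a
    have hdar : (d:ℝ) ≤ a * R := Nat.floor_le (by positivity)
    have hlogd : Real.log d ≤ Real.log (a*R) := by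
      have hd0 : (0:ℝ) < d := by
        have : 1 ≤ d := hc1.trans hdc
        exact_mod_cast Nat.lt_of_lt_of_le Nat.zero_lt_one this
      exact Real.log_le_log hd0 hdar
    have hlogc : Real.log a ≤ Real.log c :=
      Real.log_le_log (by linarith) hca
    have hlar : Real.log (a*R) = Real.log a + Real.log R :=
      Real.log_mul (by linarith) (by linarith)
    linarith

lemma cover4 : ∀ i j k l m : Fin 4, i ≠ j → i ≠ k → i ≠ l → j ≠ k → j ≠ l → k ≠ l →
    m = i ∨ m = j ∨ m = k ∨ m = l := by decide

lemma prod4 (i j k l : Fin 4) (hij : i ≠ j) (hik : i ≠ k) (hil : i ≠ l)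
    (hjk : j ≠ k) (hjl : j ≠ l) (hkl : k ≠ l) (a : Fin 4 → ℝ) :
    a 0 * a 1 * a 2 * a 3 = a i * a j * a k * a l := by
  have huniv : ({i,j,k,l} : Finset (Fin 4)) = Finset.univ := by
    apply Finset.eq_univ_of_card
    rw [Finset.card_insert_of_notMem (by simp [hij, hik, hil]),
        Finset.card_insert_of_notMem (by simp [hjk, hjl]),
        Finset.card_insert_of_notMem (by simp [hkl]), Finset.card_singleton]
    rfl
  have h1 : ∏ m ∈ ({i,j,k,l} : Finset (Fin 4)), a m = a i * (a j * (a k * a l)) := by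
    rw [Finset.prod_insert (by simp [hij, hik, hil]),
        Finset.prod_insert (by simp [hjk, hjl]),
        Finset.prod_insert (by simp [hkl]), Finset.prod_singleton]
  rw [huniv, Fin.prod_univ_four] at h1
  rw [h1]; ring

noncomputable def myEquiv (i j k l : Fin 4) (hij : i ≠ j) (hik : i ≠ k) (hil : i ≠ l)
    (hjk : j ≠ k) (hjl : j ≠ l) (hkl : k ≠ l) : (Fin 4 → ℕ) ≃ (ℕ × ℕ × ℕ × ℕ) where
  toFun a := (a i, a j, a k, a l)
  invFun p m := if m = i then p.1 else if m = j then p.2.1 else if m = k then p.2.2.1 else p.2.2.2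
  left_inv a := by
    funext m
    rcases cover4 i j k l m hij hik hil hjk hjl hkl with h | h | h | h <;> subst h <;>
      simp [hij.symm, hik.symm, hil.symm, hjk.symm, hjl.symm, hkl.symm]
  right_inv p := by
    simp [hij.symm, hik.symm, hil.symm, hjk.symm, hjl.symm, hkl.symm]

/-- For `B ≥ 3`, `T ≥ 1`, `W ≥ 1` and a fixed choice of distinct indices
`(i,j,k,l)`, the sum of `1/(a1·a2·a3·a4)` over quadruples of positive integers
with `a_m ≤ B`, `a_i²a_j²a_k²/a_l ≤ B/T` and `a_i²a_j²a_k²/(W³B) ≤ a_l` is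
`≪ (log B)³ · (log(W³T) + 1)` with an absolute implied constant. -/
theorem stmt_13 :
    ∃ c : ℝ, 0 < c ∧
      ∀ (i j k l : Fin 4), i ≠ j → i ≠ k → i ≠ l → j ≠ k → j ≠ l → k ≠ l →
      ∀ (B T W : ℝ), 3 ≤ B → 1 ≤ T → 1 ≤ W →
      (∑' a : Fin 4 → ℕ,
        (if (∀ m, 1 ≤ a m ∧ (a m : ℝ) ≤ B) ∧
            B * (a l : ℝ) ≤ T * (((a i : ℝ))^2 * ((a j : ℝ))^2 * ((a k : ℝ))^2) ∧
            ((a i : ℝ))^2 * ((a j : ℝ))^2 * ((a k : ℝ))^2 ≤ W^3 * B * (a l : ℝ) then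
          (1 : ℝ) / ((a 0 : ℝ) * (a 1 : ℝ) * (a 2 : ℝ) * (a 3 : ℝ)) else 0))
      ≤ c * (Real.log B)^3 * (Real.log (W^3 * T) + 1) := by
  refine ⟨8, by norm_num, ?_⟩
  intro i j k l hij hik hil hjk hjl hkl B T W hB hT hW
  have hB0 : (0:ℝ) < B := by linarith
  have hW0 : (0:ℝ) < W := by linarith
  have hW3 : (1:ℝ) ≤ W^3 := one_le_pow₀ hW
  have hR1 : (1:ℝ) ≤ W^3 * T := le_trans hW3 (le_mul_of_one_le_right (by linarith) hT)
  set K := Real.log (W^3 * T) + 1 with hKdef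
  have hK0 : (0:ℝ) ≤ K := by
    have := Real.log_nonneg hR1; simp [hKdef]; linarith
  have hlogB : (1:ℝ) ≤ Real.log B := by
    rw [Real.le_log_iff_exp_le hB0]
    have := Real.exp_one_lt_d9
    linarith
  set N := ⌊B⌋₊ with hNdef
  set I := Finset.Icc 1 N with hIdef
  -- the function on quadruples
  set G : ℕ × ℕ × ℕ × ℕ → ℝ := fun p =>
    if ((1 ≤ p.1 ∧ (p.1:ℝ) ≤ B) ∧ (1 ≤ p.2.1 ∧ (p.2.1:ℝ) ≤ B) ∧
        (1 ≤ p.2.2.1 ∧ (p.2.2.1:ℝ) ≤ B) ∧ (1 ≤ p.2.2.2 ∧ (p.2.2.2:ℝ) ≤ B)) ∧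
        B * (p.2.2.2:ℝ) ≤ T * ((p.1:ℝ)^2 * (p.2.1:ℝ)^2 * (p.2.2.1:ℝ)^2) ∧
        (p.1:ℝ)^2 * (p.2.1:ℝ)^2 * (p.2.2.1:ℝ)^2 ≤ W^3 * B * (p.2.2.2:ℝ) then
      (1:ℝ)/((p.1:ℝ) * (p.2.1:ℝ) * (p.2.2.1:ℝ) * (p.2.2.2:ℝ)) else 0 with hGdef
  -- Step 1: rewrite tsum
  have step1 : (∑' a : Fin 4 → ℕ,
        (if (∀ m, 1 ≤ a m ∧ (a m : ℝ) ≤ B) ∧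
            B * (a l : ℝ) ≤ T * (((a i : ℝ))^2 * ((a j : ℝ))^2 * ((a k : ℝ))^2) ∧
            ((a i : ℝ))^2 * ((a j : ℝ))^2 * ((a k : ℝ))^2 ≤ W^3 * B * (a l : ℝ) then
          (1 : ℝ) / ((a 0 : ℝ) * (a 1 : ℝ) * (a 2 : ℝ) * (a 3 : ℝ)) else 0))
      = ∑' p : ℕ × ℕ × ℕ × ℕ, G p := by
    rw [← Equiv.tsum_eq (myEquiv i j k l hij hik hil hjk hjl hkl) G]
    apply tsum_congr
    intro a
    simp only [myEquiv, Equiv.coe_fn_mk, hGdef]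
    apply if_congr
    · constructor
      · rintro ⟨h1, h2, h3⟩
        exact ⟨⟨h1 i, h1 j, h1 k, h1 l⟩, h2, h3⟩
      · rintro ⟨⟨h1, h2, h3, h4⟩, h5, h6⟩
        refine ⟨?_, h5, h6⟩
        intro m
        rcases cover4 i j k l m hij hik hil hjk hjl hkl with h | h | h | h <;>
          subst h <;> assumption
    · rw [prod4 i j k l hij hik hil hjk hjl hkl (fun m => ((a m : ℝ)))]
    · rfl
  rw [step1]
  -- Step 2: tsum equals finite sum
  have step2 : (∑' p : ℕ × ℕ × ℕ × ℕ, G p) = ∑ p ∈ I ×ˢ I ×ˢ I ×ˢ I, G p := by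
    apply tsum_eq_sum
    intro p hp
    rw [hGdef]
    simp only []
    rw [if_neg]
    rintro ⟨⟨h1, h2, h3, h4⟩, -, -⟩
    apply hp
    simp only [hIdef, Finset.mem_product, Finset.mem_Icc]
    exact ⟨⟨h1.1, Nat.le_floor h1.2⟩, ⟨h2.1, Nat.le_floor h2.2⟩,
      ⟨h3.1, Nat.le_floor h3.2⟩, ⟨h4.1, Nat.le_floor h4.2⟩⟩
  rw [step2]
  simp only [Finset.sum_product]
  -- harmonic sum over I
  have H1 : ∑ n ∈ I, (1:ℝ)/n ≤ Real.log B + 1 := by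
    apply harm I 1 B le_rfl (by linarith)
    intro n hn
    simp only [hIdef, Finset.mem_Icc] at hn
    constructor
    · exact_mod_cast hn.1
    · rw [one_mul]
      calc (n:ℝ) ≤ (N:ℝ) := by exact_mod_cast hn.2
        _ ≤ B := Nat.floor_le (by linarith)
  -- generic step
  have step : ∀ (f : ℕ → ℝ) (c : ℝ), 0 ≤ c → (∀ n ∈ I, f n ≤ (1/(n:ℝ)) * c) →
      ∑ n ∈ I, f n ≤ (Real.log B + 1) * c := by
    intro f c hc hf
    refine le_trans (Finset.sum_le_sum hf) ?_
    rw [← Finset.sum_mul]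
    exact mul_le_mul_of_nonneg_right H1 hc
  -- inner bound
  have inner : ∀ x y z : ℕ, ∑ w ∈ I, G (x, y, z, w) ≤ (1/((x:ℝ)*(y:ℝ)*(z:ℝ))) * K := by
    intro x y z
    have heq : ∀ w ∈ I, G (x, y, z, w) =
        (1/((x:ℝ)*(y:ℝ)*(z:ℝ))) * (if ((1 ≤ x ∧ (x:ℝ) ≤ B) ∧ (1 ≤ y ∧ (y:ℝ) ≤ B) ∧
        (1 ≤ z ∧ (z:ℝ) ≤ B) ∧ (1 ≤ w ∧ (w:ℝ) ≤ B)) ∧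
        B * (w:ℝ) ≤ T * ((x:ℝ)^2 * (y:ℝ)^2 * (z:ℝ)^2) ∧
        (x:ℝ)^2 * (y:ℝ)^2 * (z:ℝ)^2 ≤ W^3 * B * (w:ℝ) then (1:ℝ)/(w:ℝ) else 0) := by
      intro w _
      rw [hGdef]
      simp only []
      split_ifs with h
      · ring
      · ring
    rw [Finset.sum_congr rfl heq, ← Finset.mul_sum]
    apply mul_le_mul_of_nonneg_left _ (by positivity)
    rw [← Finset.sum_filter]
    apply harm _ (max 1 (((x:ℝ)^2 * (y:ℝ)^2 * (z:ℝ)^2)/(W^3*B))) (W^3*T) (le_max_left _ _) hR1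
    intro n hn
    simp only [Finset.mem_filter] at hn
    obtain ⟨-, ⟨⟨hx, hy, hz, hw⟩, h5, h6⟩⟩ := hn
    have hn1 : (1:ℝ) ≤ (n:ℝ) := by exact_mod_cast hw.1
    have hW3B : (0:ℝ) < W^3 * B := by positivity
    constructor
    · apply max_le hn1
      rw [div_le_iff₀ hW3B]
      linarith [h6]
    · have hup : (n:ℝ) ≤ T * ((x:ℝ)^2 * (y:ℝ)^2 * (z:ℝ)^2) / B := by
        rw [le_div_iff₀ hB0]
        linarith [h5]
      refine le_trans hup ?_
      have hkey : T * ((x:ℝ)^2 * (y:ℝ)^2 * (z:ℝ)^2) / B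
          = (((x:ℝ)^2 * (y:ℝ)^2 * (z:ℝ)^2)/(W^3*B)) * (W^3*T) := by
        field_simp
      rw [hkey]
      apply mul_le_mul_of_nonneg_right (le_max_right _ _) (by positivity)
  -- assemble
  have bz : ∀ x y : ℕ, ∑ z ∈ I, ∑ w ∈ I, G (x, y, z, w)
      ≤ (Real.log B + 1) * ((1/(x:ℝ)) * (1/(y:ℝ)) * K) := by
    intro x y
    apply step _ _ (by positivity)
    intro z _
    refine le_trans (inner x y z) (le_of_eq (by ring))
  have by' : ∀ x : ℕ, ∑ y ∈ I, ∑ z ∈ I, ∑ w ∈ I, G (x, y, z, w)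
      ≤ (Real.log B + 1) * ((1/(x:ℝ)) * ((Real.log B + 1) * K)) := by
    intro x
    apply step _ _ (by positivity)
    intro y _
    refine le_trans (bz x y) (le_of_eq (by ring))
  have bx : ∑ x ∈ I, ∑ y ∈ I, ∑ z ∈ I, ∑ w ∈ I, G (x, y, z, w)
      ≤ (Real.log B + 1) * ((Real.log B + 1) * ((Real.log B + 1) * K)) := by
    apply step _ _ (by positivity)
    intro x _
    refine le_trans (by' x) (le_of_eq (by ring))
  refine le_trans bx ?_
  set L := Real.log B with hLdef
  have h2 : L + 1 ≤ 2 * L := by linarith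
  have hL0 : (0:ℝ) ≤ L := by linarith
  have a1 : (L+1) * K ≤ (2*L) * K := mul_le_mul_of_nonneg_right h2 hK0
  have a2 : (L+1) * ((L+1) * K) ≤ (2*L) * ((2*L) * K) :=
    mul_le_mul h2 a1 (by positivity) (by linarith)
  have a3 : (L+1) * ((L+1) * ((L+1) * K)) ≤ (2*L) * ((2*L) * ((2*L) * K)) :=
    mul_le_mul h2 a2 (by positivity) (by linarith)
  refine le_trans a3 (le_of_eq (by ring))
end

section
/- Suppose complex numbers z12, z13, z14, z23, z24, z34 satisfy the linear relations z13 = z23 − z34, z24 = z23 − z12, z14 = z23 − z34 − z12, and the bounds |z_{ij} z_{jk} z_{kl}| ≤ 1 for all sequences of distinct indices (i,j,k,l) from {1,2,3,4} (with z_{ji} = z_{ij}). If M = max_{i<j} |z_{ij}| > 1, say M = |z12| (WLOG), then there exists an index i ∈ {1,2,3,4} such that |z_{ij}|, |z_{ik}|, |z_{il}| ≪ 1/M^2 and |z_{jk}|, |z_{jl}|, |z_{kl}| ≤ M, with an absolute implied constant. -/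
/-- Key claim in Proposition 4.3: if the `z_{ij}` (symmetric in the indices)
satisfy the linear torsor relations, the height-type bounds
`|z_{ij}z_{jk}z_{kl}| ≤ 1` for all distinct `i,j,k,l`, and the maximum
`M = |z_{12}| > 1`, then there is an index `i` such that
`|z_{ij}|, |z_{ik}|, |z_{il}| ≤ 4/M²` while `|z_{jk}|, |z_{jl}|, |z_{kl}| ≤ M`. -/
theorem stmt_18 (z : Fin 4 → Fin 4 → ℂ)
    (hsym : ∀ i j, z i j = z j i)
    (hrel1 : z 0 2 = z 1 2 - z 2 3)
    (hrel2 : z 1 3 = z 1 2 - z 0 1)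
    (hrel3 : z 0 3 = z 1 2 - z 2 3 - z 0 1)
    (hbound : ∀ i j k l : Fin 4, i ≠ j → i ≠ k → i ≠ l → j ≠ k → j ≠ l → k ≠ l →
      ‖z i j * z j k * z k l‖ ≤ 1)
    (hM : 1 < ‖z 0 1‖)
    (hmax : ∀ i j : Fin 4, i ≠ j → ‖z i j‖ ≤ ‖z 0 1‖) :
    ∃ i : Fin 4,
      (∀ j, j ≠ i → ‖z i j‖ ≤ 4 / ‖z 0 1‖ ^ 2) ∧
      (∀ j k, j ≠ i → k ≠ i → j ≠ k →
        ‖z j k‖ ≤ ‖z 0 1‖) := by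
  set M := ‖z 0 1‖ with hMdef
  have hM0 : (0 : ℝ) < M := lt_trans one_pos hM
  have hM2 : (0 : ℝ) < M ^ 2 := by positivity
  have hadd : (2:ℝ)/M^2 + 2/M^2 = 4/M^2 := by ring
  have hpos : (0:ℝ) ≤ 2/M^2 := by positivity
  -- |z12| + |z13| ≥ M since z01 = z12 - z13
  have hsum : M ≤ ‖z 1 2‖ + ‖z 1 3‖ := by
    have h : z 0 1 = z 1 2 - z 1 3 := by rw [hrel2]; ring
    calc M = ‖z 1 2 - z 1 3‖ := by rw [hMdef, h]
      _ ≤ ‖z 1 2‖ + ‖z 1 3‖ := by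
          simpa [sub_eq_add_neg] using norm_add_le (z 1 2) (-(z 1 3))
  rcases le_or_gt (M / 2) (‖z 1 2‖) with hbig | hsmall
  · -- |z12| ≥ M/2 : vertex 3 works
    have h1 := hbound 3 0 1 2 (by decide) (by decide) (by decide) (by decide)
      (by decide) (by decide)
    have h2 := hbound 3 2 1 0 (by decide) (by decide) (by decide) (by decide)
      (by decide) (by decide)
    rw [norm_mul, norm_mul, hsym 3 0] at h1
    rw [norm_mul, norm_mul, hsym 3 2, hsym 2 1, hsym 1 0] at h2
    have h03 : ‖z 0 3‖ ≤ 2 / M ^ 2 := by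
      rw [le_div_iff₀ hM2]
      nlinarith [norm_nonneg (z 0 3), norm_nonneg (z 1 2)]
    have h23 : ‖z 2 3‖ ≤ 2 / M ^ 2 := by
      rw [le_div_iff₀ hM2]
      nlinarith [norm_nonneg (z 2 3), norm_nonneg (z 1 2)]
    have heq : z 1 3 = z 0 3 + z 2 3 := by rw [hrel2, hrel3]; ring
    have h13 : ‖z 1 3‖ ≤ 4 / M ^ 2 := by
      rw [heq]
      calc ‖z 0 3 + z 2 3‖
          ≤ ‖z 0 3‖ + ‖z 2 3‖ := norm_add_le _ _
        _ ≤ 4 / M ^ 2 := by linarith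
    refine ⟨3, ?_, fun j k hj hk hjk => hmax j k hjk⟩
    intro j hj
    fin_cases j
    · show ‖z 3 0‖ ≤ 4 / M ^ 2; rw [hsym 3 0]; linarith
    · show ‖z 3 1‖ ≤ 4 / M ^ 2; rw [hsym 3 1]; exact h13
    · show ‖z 3 2‖ ≤ 4 / M ^ 2; rw [hsym 3 2]; linarith
    · exact absurd rfl hj
  · -- |z13| ≥ M/2 : vertex 2 works
    have hbig' : M / 2 ≤ ‖z 1 3‖ := by linarith
    have h1 := hbound 0 1 3 2 (by decide) (by decide) (by decide) (by decide)
      (by decide) (by decide)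
    have h2 := hbound 2 0 1 3 (by decide) (by decide) (by decide) (by decide)
      (by decide) (by decide)
    rw [norm_mul, norm_mul, hsym 3 2] at h1
    rw [norm_mul, norm_mul, hsym 2 0] at h2
    have h23 : ‖z 2 3‖ ≤ 2 / M ^ 2 := by
      rw [le_div_iff₀ hM2]
      nlinarith [norm_nonneg (z 2 3), norm_nonneg (z 1 3)]
    have h02 : ‖z 0 2‖ ≤ 2 / M ^ 2 := by
      rw [le_div_iff₀ hM2]
      nlinarith [norm_nonneg (z 0 2), norm_nonneg (z 1 3)]
    have heq : z 1 2 = z 0 2 + z 2 3 := by rw [hrel1]; ring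
    have h12 : ‖z 1 2‖ ≤ 4 / M ^ 2 := by
      rw [heq]
      calc ‖z 0 2 + z 2 3‖
          ≤ ‖z 0 2‖ + ‖z 2 3‖ := norm_add_le _ _
        _ ≤ 4 / M ^ 2 := by linarith
    refine ⟨2, ?_, fun j k hj hk hjk => hmax j k hjk⟩
    intro j hj
    fin_cases j
    · show ‖z 2 0‖ ≤ 4 / M ^ 2; rw [hsym 2 0]; linarith
    · show ‖z 2 1‖ ≤ 4 / M ^ 2; rw [hsym 2 1]; exact h12
    · exact absurd rfl hj
    · show ‖z 2 3‖ ≤ 4 / M ^ 2; linarith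
end

section
/- For squarefree positive integers d1, d2, d3, d4 and a real c ∈ (0,1), the sum Σ μ(d1)^2μ(d2)^2μ(d3)^2μ(d4)^2 · d1^c / (lcm(d1,d2,gcd(d3,d4)) · lcm(d2,d3,d4) · lcm(d1,d3,d4)) over all 4-tuples of pairwise coprime squarefree positive integers converges, and hence the tail with d1 > T is ≪_c T^{-c}. -/
open ArithmeticFunction ArithmeticFunction.Moebius in
private lemma mu_sq_le_one' (n : ℕ) : ((μ n : ℝ))^2 ≤ 1 := by
  by_cases h : Squarefree n
  · have h2 : ((μ n : ℤ))^2 = 1 := moebius_sq_eq_one_of_squarefree h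
    calc ((μ n : ℝ))^2 = ((((μ n : ℤ))^2 : ℤ) : ℝ) := by push_cast; ring
    _ ≤ 1 := by rw [h2]; norm_num
  · simp [moebius_eq_zero_of_not_squarefree h]

private lemma denom_eq {d1 d2 d3 d4 : ℕ}
    (h12 : Nat.Coprime d1 d2) (h13 : Nat.Coprime d1 d3) (h14 : Nat.Coprime d1 d4)
    (h23 : Nat.Coprime d2 d3) (h24 : Nat.Coprime d2 d4) (h34 : Nat.Coprime d3 d4) :
    (Nat.lcm d1 (Nat.lcm d2 (Nat.gcd d3 d4)) : ℝ) *
      (Nat.lcm d2 (Nat.lcm d3 d4) : ℝ) * (Nat.lcm d1 (Nat.lcm d3 d4) : ℝ)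
      = ((d1 : ℝ) * d2 * d3 * d4)^2 := by
  have hg : Nat.gcd d3 d4 = 1 := h34
  have h34' : Nat.lcm d3 d4 = d3 * d4 := Nat.Coprime.lcm_eq_mul h34
  have e1 : Nat.lcm d1 (Nat.lcm d2 (Nat.gcd d3 d4)) = d1 * d2 := by
    rw [hg, Nat.lcm_one_right, Nat.Coprime.lcm_eq_mul h12]
  have e2 : Nat.lcm d2 (Nat.lcm d3 d4) = d2 * (d3 * d4) := by
    rw [h34', Nat.Coprime.lcm_eq_mul (Nat.Coprime.mul_right h23 h24)]
  have e3 : Nat.lcm d1 (Nat.lcm d3 d4) = d1 * (d3 * d4) := by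
    rw [h34', Nat.Coprime.lcm_eq_mul (Nat.Coprime.mul_right h13 h14)]
  rw [e1, e2, e3]
  push_cast
  ring

private lemma rpow_neg_two_eq (n : ℕ) : (n : ℝ) ^ (-2 : ℝ) = ((n : ℝ)^2)⁻¹ := by
  rw [show (-2 : ℝ) = -((2 : ℕ) : ℝ) by norm_num,
    Real.rpow_neg (Nat.cast_nonneg n), Real.rpow_natCast]

private lemma key_eq {c : ℝ} {d1 d2 d3 d4 : ℕ}
    (h1 : 0 < d1) (h2 : 0 < d2) (h3 : 0 < d3) (h4 : 0 < d4) :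
    (d1 : ℝ) ^ c / ((d1 : ℝ) * d2 * d3 * d4)^2
      = (d1 : ℝ) ^ (c - 2) * ((d2 : ℝ) ^ (-2 : ℝ) *
        ((d3 : ℝ) ^ (-2 : ℝ) * (d4 : ℝ) ^ (-2 : ℝ))) := by
  have hd1 : (0:ℝ) < (d1 : ℝ) := by exact_mod_cast h1
  rw [show (c - 2 : ℝ) = c + (-((2:ℕ):ℝ)) by push_cast; ring,
    Real.rpow_add hd1, Real.rpow_neg hd1.le, Real.rpow_natCast,
    rpow_neg_two_eq, rpow_neg_two_eq, rpow_neg_two_eq,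
    show ((d1:ℝ) * d2 * d3 * d4)^2
      = (d1:ℝ)^2 * ((d2:ℝ)^2 * ((d3:ℝ)^2 * (d4:ℝ)^2)) by ring,
    div_eq_mul_inv, mul_inv, mul_inv, mul_inv]
  ring

set_option maxHeartbeats 2000000 in
open ArithmeticFunction ArithmeticFunction.Moebius in
/-- Rankin-trick bound in Lemma 5.7: for `c ∈ (0,1)`, the sum
`Σ μ(d₁)²μ(d₂)²μ(d₃)²μ(d₄)² d₁^c / (lcm(d₁,d₂,gcd(d₃,d₄))·lcm(d₂,d₃,d₄)·lcm(d₁,d₃,d₄))`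
over pairwise coprime squarefree quadruples converges, and hence the tail of
the corresponding sum without `d₁^c` over `d₁ > T` is `≪_c T^{-c}`. -/
theorem stmt_19 (c : ℝ) (hc0 : 0 < c) (hc1 : c < 1) :
    Summable (fun d : ℕ × ℕ × ℕ × ℕ =>
      (if 0 < d.1 ∧ 0 < d.2.1 ∧ 0 < d.2.2.1 ∧ 0 < d.2.2.2 ∧
          Nat.Coprime d.1 d.2.1 ∧ Nat.Coprime d.1 d.2.2.1 ∧ Nat.Coprime d.1 d.2.2.2 ∧
          Nat.Coprime d.2.1 d.2.2.1 ∧ Nat.Coprime d.2.1 d.2.2.2 ∧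
          Nat.Coprime d.2.2.1 d.2.2.2 then
        ((μ d.1 : ℝ)^2 * (μ d.2.1 : ℝ)^2 * (μ d.2.2.1 : ℝ)^2 * (μ d.2.2.2 : ℝ)^2) *
          (d.1 : ℝ) ^ c /
          ((Nat.lcm d.1 (Nat.lcm d.2.1 (Nat.gcd d.2.2.1 d.2.2.2)) : ℝ) *
            (Nat.lcm d.2.1 (Nat.lcm d.2.2.1 d.2.2.2) : ℝ) *
            (Nat.lcm d.1 (Nat.lcm d.2.2.1 d.2.2.2) : ℝ))
      else 0)) ∧
    ∃ C : ℝ, 0 < C ∧ ∀ T : ℝ, 1 ≤ T →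
      (∑' d : ℕ × ℕ × ℕ × ℕ,
        (if 0 < d.1 ∧ 0 < d.2.1 ∧ 0 < d.2.2.1 ∧ 0 < d.2.2.2 ∧ T < (d.1 : ℝ) ∧
            Nat.Coprime d.1 d.2.1 ∧ Nat.Coprime d.1 d.2.2.1 ∧ Nat.Coprime d.1 d.2.2.2 ∧
            Nat.Coprime d.2.1 d.2.2.1 ∧ Nat.Coprime d.2.1 d.2.2.2 ∧
            Nat.Coprime d.2.2.1 d.2.2.2 then
          ((μ d.1 : ℝ)^2 * (μ d.2.1 : ℝ)^2 * (μ d.2.2.1 : ℝ)^2 * (μ d.2.2.2 : ℝ)^2) /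
            ((Nat.lcm d.1 (Nat.lcm d.2.1 (Nat.gcd d.2.2.1 d.2.2.2)) : ℝ) *
              (Nat.lcm d.2.1 (Nat.lcm d.2.2.1 d.2.2.2) : ℝ) *
              (Nat.lcm d.1 (Nat.lcm d.2.2.1 d.2.2.2) : ℝ))
        else 0))
      ≤ C * T ^ (-c) := by
  have h0' : ∀ (n : ℕ) (r : ℝ), (0:ℝ) ≤ (n : ℝ) ^ r := fun n r =>
    Real.rpow_nonneg (Nat.cast_nonneg n) r
  -- the dominating function
  have hsum1 : Summable (fun n : ℕ => (n : ℝ) ^ (c - 2)) := by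
    rw [Real.summable_nat_rpow]; linarith
  have hsum2 : Summable (fun n : ℕ => (n : ℝ) ^ (-2 : ℝ)) := by
    rw [Real.summable_nat_rpow]; norm_num
  have hA : Summable (fun x : ℕ × ℕ => (x.1 : ℝ) ^ (-2 : ℝ) * (x.2 : ℝ) ^ (-2 : ℝ)) :=
    Summable.mul_of_nonneg hsum2 hsum2 (fun n => h0' n _) (fun n => h0' n _)
  have hB : Summable (fun x : ℕ × ℕ × ℕ => (x.1 : ℝ) ^ (-2 : ℝ) *
      ((x.2.1 : ℝ) ^ (-2 : ℝ) * (x.2.2 : ℝ) ^ (-2 : ℝ))) :=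
    Summable.mul_of_nonneg hsum2 hA (fun n => h0' n _)
      (fun x => mul_nonneg (h0' _ _) (h0' _ _))
  have hFsum : Summable (fun d : ℕ × ℕ × ℕ × ℕ =>
      (d.1 : ℝ) ^ (c - 2) * ((d.2.1 : ℝ) ^ (-2 : ℝ) *
        ((d.2.2.1 : ℝ) ^ (-2 : ℝ) * (d.2.2.2 : ℝ) ^ (-2 : ℝ)))) :=
    Summable.mul_of_nonneg hsum1 hB (fun n => h0' n _)
      (fun x => mul_nonneg (h0' _ _) (mul_nonneg (h0' _ _) (h0' _ _)))
  have hFnonneg : ∀ d : ℕ × ℕ × ℕ × ℕ, (0:ℝ) ≤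
      (d.1 : ℝ) ^ (c - 2) * ((d.2.1 : ℝ) ^ (-2 : ℝ) *
        ((d.2.2.1 : ℝ) ^ (-2 : ℝ) * (d.2.2.2 : ℝ) ^ (-2 : ℝ))) := fun d =>
    mul_nonneg (h0' _ _) (mul_nonneg (h0' _ _) (mul_nonneg (h0' _ _) (h0' _ _)))
  -- μ² product bound
  have hPle : ∀ d1 d2 d3 d4 : ℕ,
      (μ d1 : ℝ)^2 * (μ d2 : ℝ)^2 * (μ d3 : ℝ)^2 * (μ d4 : ℝ)^2 ≤ 1 := by
    intro d1 d2 d3 d4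
    exact mul_le_one₀ (mul_le_one₀ (mul_le_one₀ (mu_sq_le_one' d1) (sq_nonneg _)
      (mu_sq_le_one' d2)) (sq_nonneg _) (mu_sq_le_one' d3)) (sq_nonneg _)
      (mu_sq_le_one' d4)
  -- the main summand
  set g : ℕ × ℕ × ℕ × ℕ → ℝ := fun d =>
    (if 0 < d.1 ∧ 0 < d.2.1 ∧ 0 < d.2.2.1 ∧ 0 < d.2.2.2 ∧
        Nat.Coprime d.1 d.2.1 ∧ Nat.Coprime d.1 d.2.2.1 ∧ Nat.Coprime d.1 d.2.2.2 ∧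
        Nat.Coprime d.2.1 d.2.2.1 ∧ Nat.Coprime d.2.1 d.2.2.2 ∧
        Nat.Coprime d.2.2.1 d.2.2.2 then
      ((μ d.1 : ℝ)^2 * (μ d.2.1 : ℝ)^2 * (μ d.2.2.1 : ℝ)^2 * (μ d.2.2.2 : ℝ)^2) *
        (d.1 : ℝ) ^ c /
        ((Nat.lcm d.1 (Nat.lcm d.2.1 (Nat.gcd d.2.2.1 d.2.2.2)) : ℝ) *
          (Nat.lcm d.2.1 (Nat.lcm d.2.2.1 d.2.2.2) : ℝ) *
          (Nat.lcm d.1 (Nat.lcm d.2.2.1 d.2.2.2) : ℝ))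
    else 0) with hgdef
  have hgnonneg : ∀ d, 0 ≤ g d := by
    intro ⟨d1, d2, d3, d4⟩
    rw [hgdef]
    dsimp only
    split
    · rename_i h
      obtain ⟨h1, h2, h3, h4, h12, h13, h14, h23, h24, h34⟩ := h
      rw [denom_eq h12 h13 h14 h23 h24 h34]
      have hd1 : (0:ℝ) < (d1 : ℝ) := by exact_mod_cast h1
      have hd2 : (0:ℝ) < (d2 : ℝ) := by exact_mod_cast h2
      have hd3 : (0:ℝ) < (d3 : ℝ) := by exact_mod_cast h3
      have hd4 : (0:ℝ) < (d4 : ℝ) := by exact_mod_cast h4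
      positivity
    · exact le_refl 0
  have hgle : ∀ d, g d ≤
      (d.1 : ℝ) ^ (c - 2) * ((d.2.1 : ℝ) ^ (-2 : ℝ) *
        ((d.2.2.1 : ℝ) ^ (-2 : ℝ) * (d.2.2.2 : ℝ) ^ (-2 : ℝ))) := by
    intro ⟨d1, d2, d3, d4⟩
    rw [hgdef]
    dsimp only
    split
    · rename_i h
      obtain ⟨h1, h2, h3, h4, h12, h13, h14, h23, h24, h34⟩ := h
      rw [denom_eq h12 h13 h14 h23 h24 h34, ← key_eq h1 h2 h3 h4]
      have hd1 : (0:ℝ) < (d1 : ℝ) := by exact_mod_cast h1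
      have hd2 : (0:ℝ) < (d2 : ℝ) := by exact_mod_cast h2
      have hd3 : (0:ℝ) < (d3 : ℝ) := by exact_mod_cast h3
      have hd4 : (0:ℝ) < (d4 : ℝ) := by exact_mod_cast h4
      have hD : (0:ℝ) < ((d1 : ℝ) * d2 * d3 * d4)^2 := by positivity
      rw [div_le_div_iff_of_pos_right hD]
      calc (μ d1 : ℝ)^2 * (μ d2 : ℝ)^2 * (μ d3 : ℝ)^2 * (μ d4 : ℝ)^2 * (d1 : ℝ)^c
          ≤ 1 * (d1 : ℝ)^c :=
            mul_le_mul_of_nonneg_right (hPle d1 d2 d3 d4) (h0' d1 c)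
        _ = (d1 : ℝ)^c := one_mul _
    · exact hFnonneg (d1, d2, d3, d4)
  have hgsum : Summable g := Summable.of_nonneg_of_le hgnonneg hgle hFsum
  have hS0 : 0 ≤ tsum g := tsum_nonneg hgnonneg
  refine ⟨hgsum, tsum g + 1, by linarith, ?_⟩
  intro T hT
  have hT0 : (0:ℝ) < T := by linarith
  set t : ℕ × ℕ × ℕ × ℕ → ℝ := fun d =>
    (if 0 < d.1 ∧ 0 < d.2.1 ∧ 0 < d.2.2.1 ∧ 0 < d.2.2.2 ∧ T < (d.1 : ℝ) ∧
        Nat.Coprime d.1 d.2.1 ∧ Nat.Coprime d.1 d.2.2.1 ∧ Nat.Coprime d.1 d.2.2.2 ∧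
        Nat.Coprime d.2.1 d.2.2.1 ∧ Nat.Coprime d.2.1 d.2.2.2 ∧
        Nat.Coprime d.2.2.1 d.2.2.2 then
      ((μ d.1 : ℝ)^2 * (μ d.2.1 : ℝ)^2 * (μ d.2.2.1 : ℝ)^2 * (μ d.2.2.2 : ℝ)^2) /
        ((Nat.lcm d.1 (Nat.lcm d.2.1 (Nat.gcd d.2.2.1 d.2.2.2)) : ℝ) *
          (Nat.lcm d.2.1 (Nat.lcm d.2.2.1 d.2.2.2) : ℝ) *
          (Nat.lcm d.1 (Nat.lcm d.2.2.1 d.2.2.2) : ℝ))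
    else 0) with htdef
  have hTc : (0:ℝ) < T ^ (-c) := Real.rpow_pos_of_pos hT0 _
  have hkey : ∀ d, t d ≤ T ^ (-c) * g d := by
    intro ⟨d1, d2, d3, d4⟩
    rw [htdef, hgdef]
    dsimp only
    split
    · rename_i h
      obtain ⟨h1, h2, h3, h4, hTd, h12, h13, h14, h23, h24, h34⟩ := h
      rw [if_pos ⟨h1, h2, h3, h4, h12, h13, h14, h23, h24, h34⟩,
        denom_eq h12 h13 h14 h23 h24 h34]
      have hd1 : (0:ℝ) < (d1 : ℝ) := by exact_mod_cast h1
      have hd2 : (0:ℝ) < (d2 : ℝ) := by exact_mod_cast h2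
      have hd3 : (0:ℝ) < (d3 : ℝ) := by exact_mod_cast h3
      have hd4 : (0:ℝ) < (d4 : ℝ) := by exact_mod_cast h4
      have hD : (0:ℝ) < ((d1 : ℝ) * d2 * d3 * d4)^2 := by positivity
      have hTcpos : (0:ℝ) < T ^ c := Real.rpow_pos_of_pos hT0 c
      have h1' : T ^ c ≤ (d1 : ℝ) ^ c :=
        Real.rpow_le_rpow hT0.le hTd.le hc0.le
      have h2' : 1 ≤ T ^ (-c) * (d1 : ℝ) ^ c := by
        rw [Real.rpow_neg hT0.le, ← div_eq_inv_mul]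
        exact (one_le_div hTcpos).mpr h1'
      set P : ℝ := (μ d1 : ℝ)^2 * (μ d2 : ℝ)^2 * (μ d3 : ℝ)^2 * (μ d4 : ℝ)^2 with hP
      have hPnn : 0 ≤ P := by rw [hP]; positivity
      calc P / ((d1 : ℝ) * d2 * d3 * d4)^2
          = (P / ((d1 : ℝ) * d2 * d3 * d4)^2) * 1 := by ring
        _ ≤ (P / ((d1 : ℝ) * d2 * d3 * d4)^2) * (T ^ (-c) * (d1 : ℝ) ^ c) :=
            mul_le_mul_of_nonneg_left h2' (div_nonneg hPnn hD.le)
        _ = T ^ (-c) * (P * (d1 : ℝ) ^ c / ((d1 : ℝ) * d2 * d3 * d4)^2) := by ring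
    · split
      · rename_i hcond
        obtain ⟨h1, h2, h3, h4, h12, h13, h14, h23, h24, h34⟩ := hcond
        rw [denom_eq h12 h13 h14 h23 h24 h34]
        have hd1 : (0:ℝ) < (d1 : ℝ) := by exact_mod_cast h1
        have hd2 : (0:ℝ) < (d2 : ℝ) := by exact_mod_cast h2
        have hd3 : (0:ℝ) < (d3 : ℝ) := by exact_mod_cast h3
        have hd4 : (0:ℝ) < (d4 : ℝ) := by exact_mod_cast h4
        positivity
      · simp
  have htnonneg : ∀ d, 0 ≤ t d := by
    intro ⟨d1, d2, d3, d4⟩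
    rw [htdef]
    dsimp only
    split
    · rename_i h
      obtain ⟨h1, h2, h3, h4, hTd, h12, h13, h14, h23, h24, h34⟩ := h
      rw [denom_eq h12 h13 h14 h23 h24 h34]
      have hd1 : (0:ℝ) < (d1 : ℝ) := by exact_mod_cast h1
      have hd2 : (0:ℝ) < (d2 : ℝ) := by exact_mod_cast h2
      have hd3 : (0:ℝ) < (d3 : ℝ) := by exact_mod_cast h3
      have hd4 : (0:ℝ) < (d4 : ℝ) := by exact_mod_cast h4
      positivity
    · exact le_refl 0
  have htsum : Summable t :=
    Summable.of_nonneg_of_le htnonneg hkey (hgsum.mul_left _)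
  calc (∑' d, t d) ≤ ∑' d, T ^ (-c) * g d := Summable.tsum_le_tsum hkey htsum (hgsum.mul_left _)
    _ = T ^ (-c) * tsum g := tsum_mul_left
    _ ≤ T ^ (-c) * (tsum g + 1) := by nlinarith
    _ = (tsum g + 1) * T ^ (-c) := by ring
end
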